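/- Let v, w ∈ ℤ² be primitive integer vectors (the two coordinates of v are coprime, and likewise for w) with d = |det(v, w)| ≠ 0, and let x, y ∈ ℝ². Then the set of points of the 2-torus T² = (ℝ/ℤ)² that lie both in the image of the line {x + s v : s ∈ ℝ} and in the image of the line {y + t w : t ∈ ℝ} under the quotient map ℝ² → (ℝ/ℤ)² is finite and has exactly d elements. -/

import Mathlib

/-!
For primitive `w`, the sequence `0 → 𝕋 → 𝕋² → 𝕋`, `θ ↦ θ • w`, `u ↦ det(u, w)`, is exact in any
abelian group `𝕋` (a Bézout relation for `w` splits it), so a point `u` of the torus lies on the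
projected line `y + ℝ w` iff `det(u - y, w) = 0` in `ℝ/ℤ`. The projected line `x + ℝ v` is
`q x + θ • v` for `θ ∈ ℝ/ℤ`, injectively since `v` is primitive, and on it this condition reads
`det(v, w) • θ = det(q y - q x, w)`. Such an equation has exactly `|det(v, w)|` solutions in
`ℝ/ℤ`: they form a coset of the `|det(v, w)|`-torsion, which is cyclic of that order.
-/

section LinesInProducts

variable {G : Type*} [AddCommGroup G]

def zsmulLineHom {ι : Type*} (v : ι → ℤ) : G →+ (ι → G) :=
  AddMonoidHom.mk' (fun θ i => v i • θ) fun θ φ => funext fun i => smul_add (v i) θ φ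

@[simp]
lemma zsmulLineHom_apply {ι : Type*} (v : ι → ℤ) (θ : G) (i : ι) :
    zsmulLineHom v θ i = v i • θ :=
  rfl

def detHom (w : Fin 2 → ℤ) : (Fin 2 → G) →+ G :=
  AddMonoidHom.mk' (fun u => w 1 • u 0 - w 0 • u 1) fun u u' => by
    simp only [Pi.add_apply, smul_add, add_sub_add_comm]

@[simp]
lemma detHom_apply (w : Fin 2 → ℤ) (u : Fin 2 → G) : detHom w u = w 1 • u 0 - w 0 • u 1 :=
  rfl

lemma detHom_zsmulLineHom (v w : Fin 2 → ℤ) (θ : G) :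
    detHom w (zsmulLineHom v θ) = (v 0 * w 1 - v 1 * w 0) • θ := by
  simp only [detHom_apply, zsmulLineHom_apply, smul_smul, sub_smul, mul_comm]

lemma zsmulLineHom_injective {v : Fin 2 → ℤ} (hv : IsCoprime (v 0) (v 1)) :
    Function.Injective (zsmulLineHom (G := G) v) := by
  obtain ⟨a, b, hab⟩ := hv
  refine (injective_iff_map_eq_zero _).2 fun θ hθ => ?_
  have h0 : v 0 • θ = 0 := congrFun hθ 0
  have h1 : v 1 • θ = 0 := congrFun hθ 1
  linear_combination (norm := module) a • h0 + b • h1 - hab • θ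

lemma ker_detHom {w : Fin 2 → ℤ} (hw : IsCoprime (w 0) (w 1)) :
    (detHom (G := G) w).ker = (zsmulLineHom w).range := by
  obtain ⟨a, b, hab⟩ := hw
  refine le_antisymm (fun u hu => ?_) ?_
  · have hu : w 1 • u 0 = w 0 • u 1 := sub_eq_zero.1 hu
    refine ⟨a • u 0 + b • u 1, funext fun i => ?_⟩
    fin_cases i
    · show w 0 • (a • u 0 + b • u 1) = u 0
      linear_combination (norm := module) hab • u 0 - b • hu
    · show w 1 • (a • u 0 + b • u 1) = u 1
      linear_combination (norm := module) hab • u 1 + a • hu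
  · rintro _ ⟨θ, rfl⟩
    rw [AddMonoidHom.mem_ker, detHom_zsmulLineHom, mul_comm, sub_self, zero_smul]

lemma range_add_zsmulLineHom_inter {w : Fin 2 → ℤ} (hw : IsCoprime (w 0) (w 1))
    (v : Fin 2 → ℤ) (a b : Fin 2 → G) :
    Set.range (fun θ => a + zsmulLineHom v θ) ∩ Set.range (fun φ => b + zsmulLineHom w φ) =
      (fun θ => a + zsmulLineHom v θ) ''
        {θ | (v 0 * w 1 - v 1 * w 0) • θ = detHom w (b - a)} := by
  ext p
  constructor
  · rintro ⟨⟨θ, rfl⟩, φ, hφ⟩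
    refine ⟨θ, ?_, rfl⟩
    have hdet := congrArg (detHom w) hφ
    simp only [map_add, detHom_zsmulLineHom, mul_comm (w 0), sub_self, zero_smul, add_zero]
      at hdet
    rw [Set.mem_ofPred_eq, map_sub, hdet, add_sub_cancel_left]
  · rintro ⟨θ, hθ, rfl⟩
    refine ⟨⟨θ, rfl⟩, ?_⟩
    obtain ⟨φ, hφ⟩ : a - b + zsmulLineHom v θ ∈ (zsmulLineHom w).range := by
      rw [← ker_detHom hw, AddMonoidHom.mem_ker, map_add, detHom_zsmulLineHom, hθ, map_sub,
        map_sub, sub_add_sub_cancel, sub_self]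
    exact ⟨φ, show b + zsmulLineHom w φ = _ by rw [hφ, ← add_assoc, add_sub_cancel]⟩

lemma ncard_range_add_zsmulLineHom_inter {v w : Fin 2 → ℤ} (hv : IsCoprime (v 0) (v 1))
    (hw : IsCoprime (w 0) (w 1)) (a b : Fin 2 → G) :
    (Set.range (fun θ => a + zsmulLineHom v θ) ∩ Set.range (fun φ => b + zsmulLineHom w φ)).ncard =
      {θ : G | (v 0 * w 1 - v 1 * w 0) • θ = detHom w (b - a)}.ncard := by
  rw [range_add_zsmulLineHom_inter hw]
  exact Set.ncard_image_of_injective _ ((add_right_injective a).comp (zsmulLineHom_injective hv))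

end LinesInProducts

namespace AddCircle

section Ring

variable {𝕜 : Type*} [Ring 𝕜] (p : 𝕜)

lemma image_line_eq_range_add_zsmulLineHom {ι : Type*} (x : ι → 𝕜) (v : ι → ℤ) :
    (fun z i => (z i : AddCircle p)) '' {z | ∃ s : 𝕜, z = x + s • fun i => (v i : 𝕜)} =
      Set.range fun θ => (fun i => (x i : AddCircle p)) + zsmulLineHom v θ := by
  have hpoint (s : 𝕜) : (fun i => ((x + s • fun i => (v i : 𝕜)) i : AddCircle p)) =
      (fun i => (x i : AddCircle p)) + zsmulLineHom v (s : AddCircle p) := by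
    ext i
    simp only [Pi.add_apply, Pi.smul_apply, smul_eq_mul, coe_add, zsmulLineHom_apply, ← coe_zsmul,
      zsmul_eq_mul, Int.cast_comm]
  ext u
  constructor
  · rintro ⟨_, ⟨s, rfl⟩, rfl⟩
    exact ⟨s, (hpoint s).symm⟩
  · rintro ⟨θ, rfl⟩
    obtain ⟨s, rfl⟩ := QuotientAddGroup.mk_surjective θ
    exact ⟨_, ⟨s, rfl⟩, hpoint s⟩

end Ring

variable {𝕜 : Type*} [Field 𝕜] [LinearOrder 𝕜] [IsStrictOrderedRing 𝕜] (p : 𝕜) [Fact (0 < p)]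

lemma setOf_nsmul_eq_zero_eq_zmultiples {n : ℕ} (hn : 0 < n) :
    {u : AddCircle p | n • u = 0} = AddSubgroup.zmultiples ((p / n : 𝕜) : AddCircle p) := by
  ext u
  constructor
  · intro hu
    obtain ⟨m, -, rfl⟩ := (AddCircle.nsmul_eq_zero_iff hn).1 hu
    rw [natCast_div_mul_eq_nsmul]
    exact nsmul_mem (AddSubgroup.mem_zmultiples _) m
  · rintro ⟨k, rfl⟩
    have hgen : n • ((p / n : 𝕜) : AddCircle p) = 0 := by
      simpa [addOrderOf_period_div hn] using addOrderOf_nsmul_eq_zero ((p / n : 𝕜) : AddCircle p)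
    show n • k • _ = 0
    rw [smul_comm, hgen, smul_zero]

lemma ncard_setOf_nsmul_eq_zero {n : ℕ} (hn : 0 < n) :
    {u : AddCircle p | n • u = 0}.ncard = n := by
  rw [setOf_nsmul_eq_zero_eq_zmultiples p hn, ← Nat.card_coe_set_eq, SetLike.coe_sort_coe,
    Nat.card_zmultiples, addOrderOf_period_div hn]

lemma ncard_setOf_zsmul_eq {n : ℤ} (hn : n ≠ 0) (c : AddCircle p) :
    {u : AddCircle p | n • u = c}.ncard = n.natAbs := by
  obtain ⟨r, rfl⟩ := QuotientAddGroup.mk_surjective c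
  have hθ : n • ((r / n : 𝕜) : AddCircle p) = r := by
    rw [← coe_zsmul, zsmul_eq_mul, mul_div_cancel₀ _ (Int.cast_ne_zero.2 hn)]
  have hfiber : {u : AddCircle p | n • u = r} =
      (((r / n : 𝕜) : AddCircle p) + ·) '' {u | n.natAbs • u = 0} := by
    ext u
    rw [Set.image_add_left, Set.mem_preimage, Set.mem_ofPred_eq, Set.mem_ofPred_eq,
      natAbs_nsmul_eq_zero, smul_add, smul_neg, hθ, neg_add_eq_zero, eq_comm]
  rw [hfiber, Set.ncard_image_of_injective _ (add_right_injective _),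
    ncard_setOf_nsmul_eq_zero p (Int.natAbs_pos.2 hn)]

end AddCircle

/-- Two straight lines in `ℝ²` with primitive integer direction vectors `v, w`
with `d = |det(v, w)| ≠ 0` project, under the quotient map `ℝ² → (ℝ/ℤ)²`, to
closed curves on the 2-torus whose intersection is a finite set with exactly
`d` elements. -/
theorem torus_geodesics_intersection_card
    (v w : Fin 2 → ℤ)
    (hv : IsCoprime (v 0) (v 1)) (hw : IsCoprime (w 0) (w 1))
    (d : ℕ) (hd : (d : ℤ) = |v 0 * w 1 - v 1 * w 0|) (hd0 : d ≠ 0)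
    (x y : Fin 2 → ℝ) :
    let q : (Fin 2 → ℝ) → (Fin 2 → AddCircle (1 : ℝ)) := fun p i => (p i : AddCircle (1 : ℝ))
    let S : Set (Fin 2 → AddCircle (1 : ℝ)) :=
      (q '' {p : Fin 2 → ℝ | ∃ s : ℝ, p = x + s • fun i => (v i : ℝ)}) ∩
        (q '' {p : Fin 2 → ℝ | ∃ t : ℝ, p = y + t • fun i => (w i : ℝ)})
    S.Finite ∧ S.ncard = d := by
  intro q S
  have hdet : v 0 * w 1 - v 1 * w 0 ≠ 0 := abs_ne_zero.1 (hd ▸ Int.natCast_ne_zero.2 hd0)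
  have hS : S.ncard = d := by
    simp only [S, q, AddCircle.image_line_eq_range_add_zsmulLineHom]
    rw [ncard_range_add_zsmulLineHom_inter hv hw, AddCircle.ncard_setOf_zsmul_eq 1 hdet]
    exact_mod_cast (Int.natCast_natAbs _).trans hd.symm
  exact ⟨Set.finite_of_ncard_ne_zero (hS ▸ hd0), hS⟩
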